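/- Let g be a real-valued random variable whose distribution is symmetric about 0 with a density h that is monotone nonincreasing on [0,∞) and bounded by h(x) ≤ 1/π. Then for H(a) := E[|sin(a g)|^q] with 1 ≤ q ≤ 2 and a = 1, we have H(1) ≥ |sin(π/4)|^q · (1 − 1/2) · (1 − 1/2) > 1/8. -/

import Mathlib

/-!
As `sin² x = (1 - cos 2x) / 2` and `sin² ≤ |sin| ^ q` for `q ≤ 2`, it suffices to show
`∫ cos (2x) h(x) dx ≤ 1/2`. By symmetry this integral is twice the one over `(0, ∞)`.
On `(0, π/4]` the integrand is at most `h ≤ 1/π`, which contributes at most `1/4`. Beyond `π/4`,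
on each period `[π/4 + kπ, π/4 + (k+1)π]` pairing `x` with `x + π/2` flips the sign of `cos (2x)`
while `h` can only decrease, so every period contributes `≤ 0`. Hence `H(1) ≥ 1/4`.
-/

open MeasureTheory Real Set Filter

section CosTwoMul

variable {h : ℝ → ℝ}

theorem intervalIntegrable_cos_two_mul_mul {a b : ℝ} (hab : a ≤ b)
    (hmono : AntitoneOn h (Icc a b)) :
    IntervalIntegrable (fun x => cos (2 * x) * h x) volume a b :=
  (uIcc_of_le hab ▸ hmono).intervalIntegrable.continuousOn_mul (by fun_prop)

theorem cos_two_mul_nonpos_of_mem_Icc {k : ℕ} {x : ℝ}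
    (hx : x ∈ Icc (π / 4 + k * π) (π / 4 + k * π + π / 2)) : cos (2 * x) ≤ 0 := by
  rw [← cos_sub_nat_mul_two_pi (2 * x) k]
  exact cos_nonpos_of_pi_div_two_le_of_le (by linarith [hx.1]) (by linarith [hx.2])

theorem intervalIntegral_cos_two_mul_mul_period_nonpos (hmono : AntitoneOn h (Ici (π / 4)))
    (k : ℕ) : ∫ x in (π / 4 + k * π)..(π / 4 + k * π + π), cos (2 * x) * h x ≤ 0 := by
  set c := π / 4 + k * π
  have hanti : AntitoneOn h (Ici c) := hmono.mono (Ici_subset_Ici.2 (by simp [c]; positivity))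
  have hc : c ≤ c + π / 2 := by linarith [pi_pos]
  have hanti_shift : AntitoneOn (fun x => h (x + π / 2)) (Ici c) := fun x hx y hy hxy =>
    hanti (by rw [mem_Ici] at hx ⊢; linarith) (by rw [mem_Ici] at hy ⊢; linarith) (by linarith)
  have hshift : ∫ x in (c + π / 2)..(c + π), cos (2 * x) * h x
      = -∫ x in c..(c + π / 2), cos (2 * x) * h (x + π / 2) := by
    rw [show c + π = c + π / 2 + π / 2 by ring, ← intervalIntegral.integral_comp_add_right,
      ← intervalIntegral.integral_neg]
    congr 1 with x
    rw [show 2 * (x + π / 2) = 2 * x + π by ring, cos_add_pi]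
    ring
  have hfirst : ∫ x in c..(c + π / 2), cos (2 * x) * h x
      ≤ ∫ x in c..(c + π / 2), cos (2 * x) * h (x + π / 2) := by
    refine intervalIntegral.integral_mono_on hc
      (intervalIntegrable_cos_two_mul_mul hc (hanti.mono Icc_subset_Ici_self))
      (intervalIntegrable_cos_two_mul_mul hc (hanti_shift.mono Icc_subset_Ici_self))
      fun x hx => mul_le_mul_of_nonpos_left ?_ (cos_two_mul_nonpos_of_mem_Icc hx)
    exact hanti hx.1 (by rw [mem_Ici]; linarith [hx.1]) (by linarith [pi_pos])
  rw [← intervalIntegral.integral_add_adjacent_intervals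
    (intervalIntegrable_cos_two_mul_mul hc (hanti.mono Icc_subset_Ici_self))
    (intervalIntegrable_cos_two_mul_mul (by linarith [pi_pos])
      (hanti.mono (Icc_subset_Ici_iff (by linarith [pi_pos]) |>.2 hc))), hshift]
  linarith

theorem intervalIntegral_cos_two_mul_mul_nonpos (hmono : AntitoneOn h (Ici (π / 4))) (n : ℕ) :
    ∫ x in (π / 4)..(π / 4 + n * π), cos (2 * x) * h x ≤ 0 := by
  induction n with
  | zero => simp
  | succ n ih =>
    have hle : π / 4 ≤ π / 4 + n * π := le_add_of_nonneg_right (by positivity)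
    rw [Nat.cast_succ, show π / 4 + (n + 1) * π = π / 4 + n * π + π by ring,
      ← intervalIntegral.integral_add_adjacent_intervals (b := π / 4 + n * π)
        (intervalIntegrable_cos_two_mul_mul hle (hmono.mono Icc_subset_Ici_self))
        (intervalIntegrable_cos_two_mul_mul (by linarith [pi_pos])
          (hmono.mono (Icc_subset_Ici_iff (by linarith [pi_pos]) |>.2 hle)))]
    linarith [intervalIntegral_cos_two_mul_mul_period_nonpos hmono n]

theorem integrable_cos_two_mul_mul {μ : Measure ℝ} (hint : Integrable h μ) :
    Integrable (fun x => cos (2 * x) * h x) μ :=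
  hint.bdd_mul (c := 1) (by fun_prop)
    (ae_of_all _ fun x => by simpa using abs_cos_le_one (2 * x))

theorem setIntegral_Ioi_cos_two_mul_mul_nonpos (hint : IntegrableOn h (Ioi (π / 4)))
    (hmono : AntitoneOn h (Ici (π / 4))) : ∫ x in Ioi (π / 4), cos (2 * x) * h x ≤ 0 :=
  le_of_tendsto (intervalIntegral_tendsto_integral_Ioi _ (integrable_cos_two_mul_mul hint)
      (tendsto_atTop_add_const_left _ _ (tendsto_natCast_atTop_atTop.atTop_mul_const pi_pos)))
    (Eventually.of_forall (intervalIntegral_cos_two_mul_mul_nonpos hmono))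

theorem setIntegral_Ioc_cos_two_mul_mul_le (hint : IntegrableOn h (Ioc 0 (π / 4)))
    (hnonneg : ∀ x, 0 ≤ h x) {M : ℝ} (hbound : ∀ x, h x ≤ M) :
    ∫ x in Ioc 0 (π / 4), cos (2 * x) * h x ≤ π / 4 * M := by
  calc ∫ x in Ioc 0 (π / 4), cos (2 * x) * h x ≤ ∫ _ in Ioc 0 (π / 4), M :=
        setIntegral_mono_on (integrable_cos_two_mul_mul hint)
          (integrableOn_const measure_Ioc_lt_top.ne) measurableSet_Ioc fun x _ =>
            (mul_le_of_le_one_left (hnonneg x) (cos_le_one _)).trans (hbound x)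
    _ = π / 4 * M := by simp [show 0 ≤ π / 4 by positivity]

theorem integral_cos_two_mul_mul_le (hint : Integrable h) (hnonneg : ∀ x, 0 ≤ h x)
    (hsymm : ∀ x, h (-x) = h x) (hmono : AntitoneOn h (Ici 0)) {M : ℝ} (hbound : ∀ x, h x ≤ M) :
    ∫ x, cos (2 * x) * h x ≤ π / 2 * M := by
  have heven : ∀ x, cos (2 * |x|) * h |x| = cos (2 * x) * h x := fun x => by
    rcases abs_choice x with hx | hx <;> simp [hx, hsymm]
  have hsplit : ∫ x in Ioi 0, cos (2 * x) * h x = (∫ x in Ioc 0 (π / 4), cos (2 * x) * h x)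
      + ∫ x in Ioi (π / 4), cos (2 * x) * h x := by
    rw [← Ioc_union_Ioi_eq_Ioi (show (0 : ℝ) ≤ π / 4 by positivity),
      setIntegral_union (Ioc_disjoint_Ioi le_rfl) measurableSet_Ioi
        (integrable_cos_two_mul_mul hint).integrableOn
        (integrable_cos_two_mul_mul hint).integrableOn]
  have hhead := setIntegral_Ioc_cos_two_mul_mul_le hint.integrableOn hnonneg hbound
  have htail := setIntegral_Ioi_cos_two_mul_mul_nonpos hint.integrableOn
    (hmono.mono (Ici_subset_Ici.2 (by positivity)))
  have hfold : ∫ x, cos (2 * x) * h x = 2 * ∫ x in Ioi 0, cos (2 * x) * h x := by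
    rw [← integral_comp_abs (f := fun x => cos (2 * x) * h x)]
    simp_rw [heven]
  rw [hfold, hsplit]
  linarith

theorem integral_sin_sq_mul (hint : Integrable h) :
    ∫ x, sin x ^ 2 * h x = ((∫ x, h x) - ∫ x, cos (2 * x) * h x) / 2 := by
  have hpt : ∀ x, sin x ^ 2 * h x = h x / 2 - cos (2 * x) * h x / 2 := fun x => by
    rw [sin_sq_eq_half_sub]; ring
  simp_rw [hpt]
  rw [integral_sub (hint.div_const _) ((integrable_cos_two_mul_mul hint).div_const _),
    integral_div, integral_div, sub_div]

end CosTwoMul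

theorem sin_sq_le_abs_sin_rpow {q : ℝ} (hq0 : 0 ≤ q) (hq2 : q ≤ 2) (x : ℝ) :
    sin x ^ 2 ≤ |sin x| ^ q := by
  rw [← sq_abs, ← rpow_two]
  exact rpow_le_rpow_of_exponent_ge' (abs_nonneg _) (abs_sin_le_one x) hq0 hq2

theorem H_one_lower_bound (h : ℝ → ℝ) (q : ℝ) (hq1 : 1 ≤ q) (hq2 : q ≤ 2)
    (hnonneg : ∀ x : ℝ, 0 ≤ h x)
    (hdensity : ∫ x, h x = 1)
    (hsymm : ∀ x : ℝ, h (-x) = h x)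
    (hmono : ∀ x y : ℝ, 0 ≤ x → x ≤ y → h y ≤ h x)
    (hbound : ∀ x : ℝ, h x ≤ 1 / Real.pi) :
    |Real.sin (Real.pi / 4)| ^ q * (1 - 1 / 2) * (1 - 1 / 2) ≤ ∫ x, |Real.sin x| ^ q * h x ∧
      (1 : ℝ) / 8 < ∫ x, |Real.sin x| ^ q * h x := by
  have hint : Integrable h := Integrable.of_integral_ne_zero (by simp [hdensity])
  have hcos : ∫ x, cos (2 * x) * h x ≤ 1 / 2 := by
    have := integral_cos_two_mul_mul_le hint hnonneg hsymm
      (fun x hx _ _ hxy => hmono x _ hx hxy) hbound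
    rwa [show π / 2 * (1 / π) = 1 / 2 by field_simp] at this
  have hq0 : 0 ≤ q := by linarith
  have hI : 1 / 4 ≤ ∫ x, |sin x| ^ q * h x := calc
    1 / 4 ≤ ∫ x, sin x ^ 2 * h x := by rw [integral_sin_sq_mul hint, hdensity]; linarith
    _ ≤ ∫ x, |sin x| ^ q * h x := by
      refine integral_mono (hint.bdd_mul (c := 1) (by fun_prop) (ae_of_all _ fun x => ?_))
        (hint.bdd_mul (c := 1) (by fun_prop) (ae_of_all _ fun x => ?_))
        fun x => mul_le_mul_of_nonneg_right (sin_sq_le_abs_sin_rpow hq0 hq2 x) (hnonneg x)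
      · simpa [abs_le] using sin_sq_le_one x
      · simpa [abs_of_nonneg (rpow_nonneg (abs_nonneg _) _)] using
          rpow_le_one (abs_nonneg _) (abs_sin_le_one x) hq0
  have hsin : |sin (π / 4)| ^ q ≤ 1 := rpow_le_one (abs_nonneg _) (abs_sin_le_one _) hq0
  constructor <;> linarith
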